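/- arXiv:2402.08422 — 6 statements merged into one kernel-verified Lean document; each statement's English description precedes it below -/
import Mathlib

section
/- For every δ ∈ (0,1), the minimum over real m > 0 of the function m ↦ (√(m/2) / δ^{1/m}) · exp(−1/2 + 1/m) equals √(1 + log(1/δ)), and the minimum is attained at m* = 2·log(1/δ) + 2. -/
/-! Substituting `δ ^ (1 / m) = exp (log δ / m)` and writing `a = 1 + log (1 / δ)`, the function
becomes `√(m / 2) · exp (a / m - 1 / 2)`, whose square is `a · x⁻¹ · exp (x - 1)` with
`x = 2 a / m`. Since `x ≤ exp (x - 1)`, with equality exactly at `x = 1`, the minimum is `√a`,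
attained at `m = 2 a`. -/

open Real

lemma sqrt_div_rpow_mul_exp_eq {δ : ℝ} (hδ : 0 < δ) (m : ℝ) :
    √(m / 2) / δ ^ (1 / m) * exp (-1 / 2 + 1 / m) =
      √(m / 2) * exp ((1 + log (1 / δ)) / m - 1 / 2) := by
  rw [rpow_def_of_pos hδ, div_eq_mul_inv, ← exp_neg, mul_assoc, ← exp_add, one_div δ, log_inv]
  ring_nf

lemma sqrt_le_sqrt_half_mul_exp (a : ℝ) {m : ℝ} (hm : 0 < m) :
    √a ≤ √(m / 2) * exp (a / m - 1 / 2) := by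
  have hsq : √(m / 2) * exp (a / m - 1 / 2) = √(m / 2 * exp (2 * a / m - 1)) := by
    rw [sqrt_mul (by positivity), show 2 * a / m - 1 = (a / m - 1 / 2) + (a / m - 1 / 2) by ring,
      exp_add, sqrt_mul_self (exp_nonneg _)]
  rw [hsq]
  apply sqrt_le_sqrt
  calc a = m / 2 * (2 * a / m) := by field_simp
    _ ≤ m / 2 * exp (2 * a / m - 1) := by
      gcongr
      linarith [add_one_le_exp (2 * a / m - 1)]

lemma sqrt_half_mul_exp_at_two_mul {a : ℝ} (ha : 0 < a) :
    √(2 * a / 2) * exp (a / (2 * a) - 1 / 2) = √a := by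
  rw [mul_div_cancel_left₀ a two_ne_zero, div_mul_cancel_right₀ ha.ne', one_div, sub_self,
    exp_zero, mul_one]

/-- for `δ ∈ (0,1)`, the minimum over `m > 0` of
`√(m/2)/δ^{1/m} · exp(-1/2 + 1/m)` equals `√(1 + log(1/δ))`,
attained at `m* = 2 log(1/δ) + 2`. -/
theorem stmt_2 (δ : ℝ) (hδ : δ ∈ Set.Ioo (0 : ℝ) 1) :
    IsLeast
        ((fun m : ℝ => Real.sqrt (m / 2) / δ ^ (1 / m) * Real.exp (-1 / 2 + 1 / m)) ''
          Set.Ioi 0)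
        (Real.sqrt (1 + Real.log (1 / δ))) ∧
      (fun m : ℝ => Real.sqrt (m / 2) / δ ^ (1 / m) * Real.exp (-1 / 2 + 1 / m))
          (2 * Real.log (1 / δ) + 2) =
        Real.sqrt (1 + Real.log (1 / δ)) := by
  obtain ⟨hδ0, hδ1⟩ := hδ
  have hlog : 0 < log (1 / δ) := log_pos (one_lt_one_div hδ0 hδ1)
  have hattained : √((2 * log (1 / δ) + 2) / 2) / δ ^ (1 / (2 * log (1 / δ) + 2)) *
      exp (-1 / 2 + 1 / (2 * log (1 / δ) + 2)) = √(1 + log (1 / δ)) := by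
    rw [sqrt_div_rpow_mul_exp_eq hδ0, show 2 * log (1 / δ) + 2 = 2 * (1 + log (1 / δ)) by ring]
    exact sqrt_half_mul_exp_at_two_mul (by positivity)
  refine ⟨⟨⟨_, Set.mem_Ioi.mpr (by positivity), hattained⟩, ?_⟩, hattained⟩
  rintro _ ⟨m, hm, rfl⟩
  dsimp only
  rw [sqrt_div_rpow_mul_exp_eq hδ0]
  exact sqrt_le_sqrt_half_mul_exp _ hm
end

section
/- Let p = (p_i)_{i∈ℕ} be a probability distribution on ℕ, X^n a sample of n i.i.d. observations from p, and p̂ the maximum likelihood estimator. Let δ₁ > 0 and let m be a positive even integer. Then with probability at least 1 − δ₁, sup_{i∈ℕ} |p_i − p̂_i(X^n)| ≤ (m/(2n)) · (1/δ₁)^{1/m} · ( Σ_{i∈ℕ} Σ_{k=1}^{m/2} (n·p_i(1−p_i))^k )^{1/m}. -/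
/-!
Markov's inequality applied to `∑ᵢ (pᵢ - p̂ᵢ)ᵐ`, which dominates `(supᵢ |pᵢ - p̂ᵢ|)ᵐ` since `m`
is even. For fixed `i`, `n (pᵢ - p̂ᵢ) = ∑ⱼ g (Xⱼ)` with `g = pᵢ - 𝟙{i}` centred, `|g| ≤ 1` and
`|E gᵃ| ≤ pᵢ (1 - pᵢ)` for `a ≥ 2`. Expanding `(∑ⱼ g (Xⱼ))ᵐ` over the maps `f : Fin m → Fin n`,
the expectation of a term vanishes as soon as some sample is hit exactly once by `f`; otherwise
`f` takes `k ≤ m / 2` values and the term is at most `(pᵢ (1 - pᵢ))ᵏ`, while at most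
`nᵏ kᵐ ≤ nᵏ (m / 2)ᵐ` maps take `k` values.
-/

open MeasureTheory Real Filter

noncomputable def sampleMeasure (p : PMF ℕ) (n : ℕ) : Measure (Fin n → ℕ) :=
  MeasureTheory.Measure.pi fun _ => p.toMeasure

noncomputable def mle (n : ℕ) (x : Fin n → ℕ) (i : ℕ) : ℝ :=
  ((Finset.univ.filter fun j => x j = i).card : ℝ) / n

open scoped ENNReal

open Finset

section Combinatorics

variable {α ι : Type*} [Fintype α] [DecidableEq ι]

theorem mem_image_univ_iff_card_fiber_ne_zero (f : α → ι) (j : ι) :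
    j ∈ univ.image f ↔ #{t | f t = j} ≠ 0 := by
  rw [← Nat.pos_iff_ne_zero, card_pos, filter_nonempty_iff]
  simp

theorem card_filter_card_image_eq_le [Fintype ι] [DecidableEq α] (k : ℕ) :
    #{f : α → ι | #(univ.image f) = k} ≤ (Fintype.card ι).choose k * k ^ Fintype.card α := by
  have hsub : ({f : α → ι | #(univ.image f) = k} : Finset (α → ι)) ⊆
      (powersetCard k (univ : Finset ι)).biUnion fun s => Fintype.piFinset fun _ : α => s := by
    intro f hf
    refine mem_biUnion.2 ⟨univ.image f, mem_powersetCard.2 ⟨subset_univ _, (mem_filter.1 hf).2⟩, ?_⟩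
    exact Fintype.mem_piFinset.2 fun t => mem_image_of_mem f (mem_univ t)
  calc _ ≤ _ := card_le_card hsub
    _ ≤ ∑ s ∈ powersetCard k (univ : Finset ι), #(Fintype.piFinset fun _ : α => s) :=
      card_biUnion_le
    _ = (Fintype.card ι).choose k * k ^ Fintype.card α := by
      rw [sum_congr rfl fun s hs => by
          rw [Fintype.card_piFinset, prod_const, (mem_powersetCard.1 hs).2, card_univ],
        sum_const, card_powersetCard, card_univ, smul_eq_mul]

theorem two_mul_card_image_le {f : α → ι} (hf : ∀ j, #{t | f t = j} ≠ 1) :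
    2 * #(univ.image f) ≤ Fintype.card α := by
  calc 2 * #(univ.image f) = ∑ _j ∈ univ.image f, 2 := by rw [sum_const, smul_eq_mul, mul_comm]
    _ ≤ ∑ j ∈ univ.image f, #{t | f t = j} := sum_le_sum fun j hj => by
      have := (mem_image_univ_iff_card_fiber_ne_zero f j).1 hj
      have := hf j
      omega
    _ = Fintype.card α := (card_eq_sum_card_image f univ).symm

theorem prod_le_pow_card_image [Fintype ι] (M : ℕ → ℝ) (h0 : M 0 = 1) {q : ℝ}
    (hq : ∀ a, 2 ≤ a → |M a| ≤ q) {f : α → ι} (hf : ∀ j, #{t | f t = j} ≠ 1) :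
    ∏ j, M #{t | f t = j} ≤ q ^ #(univ.image f) := by
  calc ∏ j, M #{t | f t = j} ≤ ∏ j, |M #{t | f t = j}| := (le_abs_self _).trans (abs_prod _ _).le
    _ ≤ ∏ j, if j ∈ univ.image f then q else 1 := by
      refine prod_le_prod (fun j _ => abs_nonneg _) fun j _ => ?_
      split_ifs with hj
      · have := (mem_image_univ_iff_card_fiber_ne_zero f j).1 hj
        have := hf j
        exact hq _ (by omega)
      · rw [not_not.1 (mt (mem_image_univ_iff_card_fiber_ne_zero f j).2 hj), h0, abs_one]
    _ = q ^ #(univ.image f) := by rw [prod_ite_mem, prod_const, univ_inter]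

theorem sum_pow_card_image_le [Fintype ι] {q : ℝ} (hq : 0 ≤ q) {m : ℕ}
    (s : Finset (Fin m → ι)) (hs : ∀ f ∈ s, #(univ.image f) ∈ Icc 1 (m / 2)) :
    ∑ f ∈ s, q ^ #(univ.image f) ≤
      ((m : ℝ) / 2) ^ m * ∑ k ∈ Icc 1 (m / 2), ((Fintype.card ι : ℝ) * q) ^ k := by
  rw [← sum_fiberwise_of_maps_to hs, mul_sum]
  refine sum_le_sum fun k hk => ?_
  have hkm : (k : ℝ) ≤ m / 2 :=
    (Nat.cast_le.2 (mem_Icc.1 hk).2).trans (Nat.cast_div_le (α := ℝ))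
  have hsub : {f ∈ s | #(univ.image f) = k} ⊆
      ({f : Fin m → ι | #(univ.image f) = k} : Finset (Fin m → ι)) :=
    fun f hf => mem_filter.2 ⟨mem_univ f, (mem_filter.1 hf).2⟩
  have hcount : (#{f ∈ s | #(univ.image f) = k} : ℝ) ≤ (Fintype.card ι : ℝ) ^ k * k ^ m := by
    have hchoose := card_filter_card_image_eq_le (α := Fin m) (ι := ι) k
    rw [Fintype.card_fin] at hchoose
    calc (#{f ∈ s | #(univ.image f) = k} : ℝ) ≤ ((Fintype.card ι).choose k * k ^ m : ℕ) := by
          exact_mod_cast (card_le_card hsub).trans hchoose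
      _ ≤ ((Fintype.card ι ^ k * k ^ m : ℕ) : ℝ) := by
          exact_mod_cast Nat.mul_le_mul_right _ (Nat.choose_le_pow _ _)
      _ = _ := by push_cast; ring
  calc ∑ f ∈ s with #(univ.image f) = k, q ^ #(univ.image f)
      = (#{f ∈ s | #(univ.image f) = k} : ℝ) * q ^ k := by
        rw [sum_congr rfl fun f hf => by rw [(mem_filter.1 hf).2], sum_const, nsmul_eq_mul]
    _ ≤ (Fintype.card ι : ℝ) ^ k * k ^ m * q ^ k := by gcongr
    _ ≤ (Fintype.card ι : ℝ) ^ k * ((m : ℝ) / 2) ^ m * q ^ k := by gcongr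
    _ = ((m : ℝ) / 2) ^ m * ((Fintype.card ι : ℝ) * q) ^ k := by ring

theorem sum_prod_moments_le [Fintype ι] (M : ℕ → ℝ) (h0 : M 0 = 1) (h1 : M 1 = 0) {q : ℝ}
    (hq : ∀ a, 2 ≤ a → |M a| ≤ q) {m : ℕ} (hm : 0 < m) :
    ∑ f : Fin m → ι, ∏ j, M #{t | f t = j} ≤
      ((m : ℝ) / 2) ^ m * ∑ k ∈ Icc 1 (m / 2), ((Fintype.card ι : ℝ) * q) ^ k := by
  set good : Finset (Fin m → ι) := {f | ∀ j, #{t | f t = j} ≠ 1}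
  have hgood : ∀ f ∈ good, #(univ.image f) ∈ Icc 1 (m / 2) := fun f hf => by
    have hle := two_mul_card_image_le (mem_filter.1 hf).2
    have hpos : 0 < #(univ.image f) := (univ_nonempty_iff.2 ⟨⟨0, hm⟩⟩).image f |>.card_pos
    rw [Fintype.card_fin] at hle
    exact mem_Icc.2 ⟨hpos, by omega⟩
  calc ∑ f : Fin m → ι, ∏ j, M #{t | f t = j}
      = ∑ f ∈ good, ∏ j, M #{t | f t = j} := by
        refine (sum_filter_of_ne fun f _ hne => ?_).symm
        intro j hj
        exact hne (prod_eq_zero (mem_univ j) (by rw [hj, h1]))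
    _ ≤ ∑ f ∈ good, q ^ #(univ.image f) :=
        sum_le_sum fun f hf => prod_le_pow_card_image M h0 hq (mem_filter.1 hf).2
    _ ≤ _ := sum_pow_card_image_le ((abs_nonneg _).trans (hq 2 le_rfl)) good hgood

end Combinatorics

section Moments

variable {Ω : Type*} [MeasurableSpace Ω] (ν : Measure Ω) [IsProbabilityMeasure ν]

theorem integral_sum_pow_eq_sum_prod {ι : Type*} [Fintype ι] [DecidableEq ι] {g : Ω → ℝ}
    (hg : Measurable g) {C : ℝ} (hC : ∀ y, |g y| ≤ C) (m : ℕ) :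
    ∫ x, (∑ j, g (x j)) ^ m ∂Measure.pi (fun _ : ι => ν) =
      ∑ f : Fin m → ι, ∏ j, ∫ y, g y ^ #{t | f t = j} ∂ν := by
  have hprod : ∀ (f : Fin m → ι) (x : ι → Ω),
      ∏ t, g (x (f t)) = ∏ j, g (x j) ^ #{t | f t = j} := fun f x => by
    rw [← prod_fiberwise univ f]
    exact prod_congr rfl fun j _ => by
      rw [prod_congr rfl fun t ht => by rw [(mem_filter.1 ht).2], prod_const]
  simp_rw [Fintype.sum_pow]
  rw [integral_finsetSum _ fun f _ => ?_]
  · simp_rw [hprod]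
    exact sum_congr rfl fun f _ => integral_fintype_prod_eq_prod fun j y => g y ^ #{t | f t = j}
  have hmeas : Measurable fun x : ι → Ω => ∏ t, g (x (f t)) :=
    measurable_prod _ fun t _ => hg.comp (measurable_pi_apply _)
  refine .of_bound hmeas.aestronglyMeasurable (C ^ m) (ae_of_all _ fun x => ?_)
  rw [Real.norm_eq_abs, abs_prod]
  calc ∏ t, |g (x (f t))| ≤ ∏ _t : Fin m, C :=
        prod_le_prod (fun t _ => abs_nonneg _) fun t _ => hC _
    _ = C ^ m := by rw [prod_const, card_univ, Fintype.card_fin]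

theorem integral_sum_pow_le {ι : Type*} [Fintype ι] {g : Ω → ℝ} (hg : Measurable g) {C : ℝ}
    (hC : ∀ y, |g y| ≤ C) (h_mean : ∫ y, g y ∂ν = 0) {q : ℝ}
    (hq : ∀ a, 2 ≤ a → |∫ y, g y ^ a ∂ν| ≤ q) {m : ℕ} (hm : 0 < m) :
    ∫ x, (∑ j, g (x j)) ^ m ∂Measure.pi (fun _ : ι => ν) ≤
      ((m : ℝ) / 2) ^ m * ∑ k ∈ Icc 1 (m / 2), ((Fintype.card ι : ℝ) * q) ^ k := by
  classical
  rw [integral_sum_pow_eq_sum_prod ν hg hC m]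
  exact sum_prod_moments_le (fun a => ∫ y, g y ^ a ∂ν) (by simp) (by simpa using h_mean) hq hm

theorem integral_pow_sub_indicator {A : Set Ω} (hA : MeasurableSet A) (a : ℕ) :
    ∫ y, (ν.real A - A.indicator 1 y) ^ a ∂ν =
      ν.real A * (ν.real A - 1) ^ a + (1 - ν.real A) * ν.real A ^ a := by
  set r := ν.real A
  have hsplit : ∀ y,
      (r - A.indicator 1 y) ^ a = r ^ a + A.indicator (fun _ => (r - 1) ^ a - r ^ a) y :=
    fun y => by by_cases hy : y ∈ A <;> simp [hy]
  simp_rw [hsplit]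
  rw [integral_add (integrable_const _) ((integrable_const _).indicator hA), integral_const,
    integral_indicator_const _ hA, probReal_univ]
  simp only [smul_eq_mul, r]
  ring

end Moments

theorem abs_bernoulli_moment_le {r : ℝ} (h0 : 0 ≤ r) (h1 : r ≤ 1) {a : ℕ} (ha : 2 ≤ a) :
    |r * (r - 1) ^ a + (1 - r) * r ^ a| ≤ r * (1 - r) := by
  obtain ⟨b, rfl⟩ : ∃ b, a = b + 2 := ⟨a - 2, by omega⟩
  have hr' : 0 ≤ 1 - r := by linarith
  calc |r * (r - 1) ^ (b + 2) + (1 - r) * r ^ (b + 2)|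
      ≤ r * (1 - r) ^ (b + 2) + (1 - r) * r ^ (b + 2) := by
        refine (abs_add_le _ _).trans_eq ?_
        rw [abs_mul, abs_mul, abs_pow, abs_pow, abs_sub_comm, abs_of_nonneg h0, abs_of_nonneg hr']
    _ = r * (1 - r) * ((1 - r) ^ (b + 1) + r ^ (b + 1)) := by ring
    _ ≤ r * (1 - r) * ((1 - r) + r) := by
        gcongr
        · exact pow_le_of_le_one hr' (by linarith) (by omega)
        · exact pow_le_of_le_one h0 h1 (by omega)
    _ = r * (1 - r) := by ring

theorem iSup_abs_le_of_tsum_ofReal_pow_le {ι : Type*} [Nonempty ι] {m : ℕ} (hm : Even m)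
    (hm0 : m ≠ 0) {d : ι → ℝ} {t : ℝ} (ht : 0 ≤ t)
    (h : ∑' i, ENNReal.ofReal (d i ^ m) ≤ ENNReal.ofReal (t ^ m)) : ⨆ i, |d i| ≤ t :=
  ciSup_le fun i => by
    have hi := (ENNReal.le_tsum i).trans h
    rw [ENNReal.ofReal_le_ofReal_iff (by positivity), ← hm.pow_abs] at hi
    exact (pow_le_pow_iff_left₀ (abs_nonneg _) ht hm0).1 hi

/-- Unlike `meas_ge_le_lintegral_div`, no `ε ≠ 0` is needed; the threshold `tᵐ` vanishes when
every `pᵢ ∈ {0, 1}`. -/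
theorem meas_lt_le_lintegral_div {α : Type*} [MeasurableSpace α] {μ : Measure α}
    {f : α → ℝ≥0∞} (hf : AEMeasurable f μ) (ε : ℝ≥0∞) :
    μ {x | ε < f x} ≤ (∫⁻ x, f x ∂μ) / ε := by
  rcases eq_or_ne ε 0 with rfl | hε0
  · by_cases hf0 : ∫⁻ x, f x ∂μ = 0
    · have hae : f =ᵐ[μ] 0 := (lintegral_eq_zero_iff' hf).1 hf0
      rw [Filter.EventuallyEq, ae_iff] at hae
      have hμ : μ {x | 0 < f x} = 0 := by simpa [pos_iff_ne_zero] using hae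
      simp [hμ]
    · simp [ENNReal.div_zero hf0]
  rcases eq_or_ne ε ⊤ with rfl | hεtop
  · simp
  exact (measure_mono fun x (hx : ε < f x) => hx.le).trans (meas_ge_le_lintegral_div hf hε0 hεtop)

theorem PMF.toReal_apply_le_one {α : Type*} (p : PMF α) (a : α) : (p a).toReal ≤ 1 :=
  ENNReal.toReal_le_of_le_ofReal zero_le_one (by simpa using p.coe_le_one a)

instance (p : PMF ℕ) (n : ℕ) : IsProbabilityMeasure (sampleMeasure p n) := by
  unfold sampleMeasure
  infer_instance

theorem integral_sub_mle_pow_le (p : PMF ℕ) {n : ℕ} (hn : 0 < n) {m : ℕ} (hm : 0 < m) (i : ℕ) :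
    ∫ x, ((p i).toReal - mle n x i) ^ m ∂sampleMeasure p n ≤
      ((m : ℝ) / (2 * n)) ^ m *
        ∑ k ∈ Icc 1 (m / 2), ((n : ℝ) * ((p i).toReal * (1 - (p i).toReal))) ^ k := by
  have hr : p.toMeasure.real {i} = (p i).toReal := by
    simp [measureReal_def, PMF.toMeasure_apply_singleton]
  set g : ℕ → ℝ := fun y => (p i).toReal - ({i} : Set ℕ).indicator 1 y
  have hr0 := (p i).toReal_nonneg
  have hr1 := p.toReal_apply_le_one i
  have hmoment := integral_pow_sub_indicator p.toMeasure (measurableSet_singleton i)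
  simp only [hr] at hmoment
  have hg : ∀ y, |g y| ≤ 1 := fun y => by
    by_cases hy : y = i <;> simp [g, hy, abs_le] <;> linarith
  have hsum : ∀ x : Fin n → ℕ, (p i).toReal - mle n x i = (∑ j, g (x j)) / n := fun x => by
    simp only [g, sum_sub_distrib, sum_const, card_univ, Fintype.card_fin, nsmul_eq_mul, mle]
    simp only [Set.indicator_apply, Set.mem_singleton_iff, Pi.one_apply, sum_boole]
    field_simp
  have key := integral_sum_pow_le p.toMeasure (ι := Fin n) (g := g) .of_discrete hg
    (by have h := hmoment 1; simp only [pow_one] at h; rw [h]; ring)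
    (fun a ha => by rw [hmoment]; exact abs_bernoulli_moment_le hr0 hr1 ha) hm
  rw [Fintype.card_fin] at key
  simp_rw [hsum, div_pow _ (n : ℝ)]
  rw [integral_div]
  calc _ ≤ (((m : ℝ) / 2) ^ m *
          ∑ k ∈ Icc 1 (m / 2), ((n : ℝ) * ((p i).toReal * (1 - (p i).toReal))) ^ k) / n ^ m :=
        div_le_div_of_nonneg_right key (by positivity)
    _ = _ := by rw [← div_div, div_pow _ (n : ℝ), div_mul_eq_mul_div]

theorem sum_pow_variance_nonneg (p : PMF ℕ) (n K i : ℕ) :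
    0 ≤ ∑ k ∈ Icc 1 K, ((n : ℝ) * ((p i).toReal * (1 - (p i).toReal))) ^ k :=
  sum_nonneg fun k _ => pow_nonneg (mul_nonneg n.cast_nonneg
    (mul_nonneg (p i).toReal_nonneg (by linarith [p.toReal_apply_le_one i]))) k

theorem summable_sum_pow_variance (p : PMF ℕ) (c : ℝ) (K : ℕ) :
    Summable fun i => ∑ k ∈ Icc 1 K, (c * ((p i).toReal * (1 - (p i).toReal))) ^ k := by
  have hp : Summable fun i => (p i).toReal :=
    ENNReal.summable_toReal (p.tsum_coe ▸ ENNReal.one_ne_top)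
  refine summable_sum fun k hk => (hp.mul_left (|c| ^ k)).of_norm_bounded fun i => ?_
  have h0 := (p i).toReal_nonneg
  have h1 := PMF.toReal_apply_le_one p i
  have hvar : (p i).toReal * (1 - (p i).toReal) ≤ (p i).toReal :=
    mul_le_of_le_one_right h0 (by linarith)
  rw [Real.norm_eq_abs, abs_pow, abs_mul, abs_of_nonneg (mul_nonneg h0 (by linarith)), mul_pow]
  gcongr
  exact (pow_le_of_le_one (by positivity) (hvar.trans h1)
    (Nat.one_le_iff_ne_zero.1 (mem_Icc.1 hk).1)).trans hvar

theorem abs_toReal_sub_mle_le_one (p : PMF ℕ) (n : ℕ) (x : Fin n → ℕ) (i : ℕ) :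
    |(p i).toReal - mle n x i| ≤ 1 := by
  have hmle : mle n x i ≤ 1 :=
    div_le_one_of_le₀ (by exact_mod_cast (card_filter_le _ _).trans (by simp)) (Nat.cast_nonneg n)
  have : 0 ≤ mle n x i := by unfold mle; positivity
  rw [abs_le]
  constructor <;> linarith [(p i).toReal_nonneg, PMF.toReal_apply_le_one p i]

theorem lintegral_tsum_sub_mle_pow_le (p : PMF ℕ) {n : ℕ} (hn : 0 < n) {m : ℕ} (hm : 0 < m)
    (hme : Even m) :
    ∫⁻ x, ∑' i, ENNReal.ofReal (((p i).toReal - mle n x i) ^ m) ∂sampleMeasure p n ≤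
      ENNReal.ofReal (((m : ℝ) / (2 * n)) ^ m *
        ∑' i, ∑ k ∈ Icc 1 (m / 2), ((n : ℝ) * ((p i).toReal * (1 - (p i).toReal))) ^ k) := by
  have hint : ∀ i, Integrable (fun x => ((p i).toReal - mle n x i) ^ m) (sampleMeasure p n) :=
    fun i => .of_bound Measurable.of_discrete.aestronglyMeasurable 1 (ae_of_all _ fun x => by
      rw [Real.norm_eq_abs, abs_pow]
      exact pow_le_one₀ (abs_nonneg _) (abs_toReal_sub_mle_le_one p n x i))
  rw [lintegral_tsum fun i => Measurable.of_discrete.aemeasurable, ← tsum_mul_left]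
  calc ∑' i, ∫⁻ x, ENNReal.ofReal (((p i).toReal - mle n x i) ^ m) ∂sampleMeasure p n
      = ∑' i, ENNReal.ofReal (∫ x, ((p i).toReal - mle n x i) ^ m ∂sampleMeasure p n) :=
        tsum_congr fun i => (ofReal_integral_eq_lintegral_ofReal (hint i)
          (ae_of_all _ fun x => hme.pow_nonneg _)).symm
    _ ≤ _ := ENNReal.tsum_le_tsum fun i =>
        ENNReal.ofReal_le_ofReal (integral_sub_mle_pow_le p hn hm i)
    _ = _ := (ENNReal.ofReal_tsum_of_nonneg
        (fun i => mul_nonneg (by positivity) (sum_pow_variance_nonneg p n _ i))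
        ((summable_sum_pow_variance p n _).mul_left _)).symm

/-- Proposition 2: with probability at least `1 - δ₁`,
`sup_i |p_i - p̂_i| ≤ (m/(2n)) (1/δ₁)^{1/m} (∑_i ∑_{k=1}^{m/2} (n p_i(1-p_i))^k)^{1/m}`. -/
theorem stmt_6 (p : PMF ℕ) (n : ℕ) (hn : 0 < n) (δ₁ : ℝ) (hδ₁ : 0 < δ₁)
    (m : ℕ) (hm : 0 < m) (hme : Even m) :
    ENNReal.ofReal (1 - δ₁) ≤
      sampleMeasure p n {x |
        (⨆ i : ℕ, |(p i).toReal - mle n x i|) ≤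
          ((m : ℝ) / (2 * n)) * (1 / δ₁) ^ ((1 : ℝ) / m) *
            (∑' i : ℕ, ∑ k ∈ Finset.Icc 1 (m / 2),
                ((n : ℝ) * ((p i).toReal * (1 - (p i).toReal))) ^ k) ^ ((1 : ℝ) / m)} := by
  set S := ∑' i : ℕ, ∑ k ∈ Finset.Icc 1 (m / 2),
    ((n : ℝ) * ((p i).toReal * (1 - (p i).toReal))) ^ k
  set t := ((m : ℝ) / (2 * n)) * (1 / δ₁) ^ ((1 : ℝ) / m) * S ^ ((1 : ℝ) / m)
  set F : (Fin n → ℕ) → ℝ≥0∞ := fun x => ∑' i, ENNReal.ofReal (((p i).toReal - mle n x i) ^ m)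
  have hS : 0 ≤ S := tsum_nonneg (sum_pow_variance_nonneg p n _)
  have ht : 0 ≤ t := by positivity
  have htm : ((m : ℝ) / (2 * n)) ^ m * S = δ₁ * t ^ m := by
    simp only [t, mul_pow, one_div (m : ℝ)]
    rw [Real.rpow_inv_natCast_pow (by positivity) hm.ne', Real.rpow_inv_natCast_pow hS hm.ne']
    field_simp
  have hmarkov : sampleMeasure p n {x | ENNReal.ofReal (t ^ m) < F x} ≤ ENNReal.ofReal δ₁ :=
    (meas_lt_le_lintegral_div Measurable.of_discrete.aemeasurable _).trans <|
      ENNReal.div_le_of_le_mul <| by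
        rw [← ENNReal.ofReal_mul hδ₁.le, ← htm]
        exact lintegral_tsum_sub_mle_pow_le p hn hm hme
  calc ENNReal.ofReal (1 - δ₁) = 1 - ENNReal.ofReal δ₁ := by
        rw [ENNReal.ofReal_sub _ hδ₁.le, ENNReal.ofReal_one]
    _ ≤ 1 - sampleMeasure p n {x | ENNReal.ofReal (t ^ m) < F x} := tsub_le_tsub_left hmarkov 1
    _ = sampleMeasure p n {x | ENNReal.ofReal (t ^ m) < F x}ᶜ :=
        (prob_compl_eq_one_sub .of_discrete).symm
    _ ≤ _ := measure_mono fun x hx =>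
        iSup_abs_le_of_tsum_ofReal_pow_le hme hm.ne' ht (not_lt.1 hx)
end

section
/- For every integer n ≥ 1 and every integer k ≥ 1, sup over p ∈ [0, 1 − 1/n] of | (p(1−p))^k − ((p + 1/n)(1 − (p + 1/n)))^k | ≤ k/(n·4^{k−1}) + 3k(k−1)(k−2)/(n^3·2^{2k−5}). -/
/-- For `a, b ∈ [0, M]`, `|a^k - b^k| ≤ k * M^(k-1) * |a - b|`. -/
lemma abs_pow_sub_pow_le_aux (M : ℝ) (hM : 0 ≤ M) :
    ∀ k : ℕ, ∀ a b : ℝ, 0 ≤ a → a ≤ M → 0 ≤ b → b ≤ M →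
      |a ^ k - b ^ k| ≤ k * M ^ (k - 1) * |a - b| := by
  intro k
  induction k with
  | zero => intro a b _ _ _ _; simp
  | succ m ih =>
    intro a b ha haM hb hbM
    have key : a ^ (m + 1) - b ^ (m + 1) = a * (a ^ m - b ^ m) + b ^ m * (a - b) := by
      ring
    have h1 : |a * (a ^ m - b ^ m)| ≤ M * (m * M ^ (m - 1) * |a - b|) := by
      rw [abs_mul, abs_of_nonneg ha]
      exact mul_le_mul haM (ih a b ha haM hb hbM) (abs_nonneg _)
        hM
    have h2 : |b ^ m * (a - b)| ≤ M ^ m * |a - b| := by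
      rw [abs_mul, abs_of_nonneg (pow_nonneg hb m)]
      exact mul_le_mul_of_nonneg_right (pow_le_pow_left₀ hb hbM m) (abs_nonneg _)
    calc |a ^ (m + 1) - b ^ (m + 1)| ≤ |a * (a ^ m - b ^ m)| + |b ^ m * (a - b)| := by
          rw [key]; exact abs_add_le _ _
      _ ≤ M * (m * M ^ (m - 1) * |a - b|) + M ^ m * |a - b| := add_le_add h1 h2
      _ ≤ (m + 1 : ℕ) * M ^ ((m + 1) - 1) * |a - b| := by
          rcases Nat.eq_zero_or_pos m with hm | hm
          · subst hm; simp
          · have : M * M ^ (m - 1) = M ^ m := by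
              rw [← pow_succ']
              congr 1
              omega
            push_cast
            have h3 : M * (↑m * M ^ (m - 1) * |a - b|) = ↑m * M ^ m * |a - b| := by
              rw [← this]; ring
            linarith

/-- Appendix A: for integers `n, k ≥ 1` and every `p ∈ [0, 1 - 1/n]`,
`|(p(1-p))^k - ((p+1/n)(1-(p+1/n)))^k| ≤ k/(n 4^{k-1}) + 3k(k-1)(k-2)/(n³ 2^{2k-5})`. -/
theorem stmt_8 (n k : ℕ) (hn : 1 ≤ n) (hk : 1 ≤ k) :
    ∀ p ∈ Set.Icc (0 : ℝ) (1 - 1 / n),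
      |(p * (1 - p)) ^ k - ((p + 1 / n) * (1 - (p + 1 / n))) ^ k| ≤
        (k : ℝ) / (n * (4 : ℝ) ^ ((k : ℤ) - 1)) +
          3 * (k : ℝ) * ((k : ℝ) - 1) * ((k : ℝ) - 2) /
            ((n : ℝ) ^ 3 * (2 : ℝ) ^ (2 * (k : ℤ) - 5)) := by
  intro p hp
  obtain ⟨hp0, hp1⟩ := hp
  have hn0 : (0 : ℝ) < n := by exact_mod_cast hn
  have hh0 : (0 : ℝ) < 1 / n := by positivity
  have hh1 : (1 : ℝ) / n ≤ 1 := by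
    rw [div_le_one hn0]; exact_mod_cast hn
  set q : ℝ := p + 1 / n with hq
  have hq0 : 0 ≤ q := by positivity
  have hq1 : q ≤ 1 := by simp only [hq]; linarith
  have hp1' : p ≤ 1 := by linarith
  -- the two products lie in [0, 1/4]
  have key : ∀ x : ℝ, 0 ≤ x → x ≤ 1 → 0 ≤ x * (1 - x) ∧ x * (1 - x) ≤ 1 / 4 := by
    intro x hx0 hx1
    constructor
    · nlinarith
    · nlinarith [sq_nonneg (x - 1 / 2)]
  obtain ⟨ha0, haM⟩ := key p hp0 hp1'
  obtain ⟨hb0, hbM⟩ := key q hq0 hq1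
  have habs : |p * (1 - p) - q * (1 - q)| ≤ 1 / n := by
    have : p * (1 - p) - q * (1 - q) = (1 / n) * (2 * p + 1 / n - 1) := by
      simp only [hq]; ring
    rw [this, abs_mul, abs_of_pos hh0]
    have h1 : |2 * p + 1 / n - 1| ≤ 1 := by
      rw [abs_le]; constructor <;> linarith
    nlinarith [le_of_lt hh0]
  have main := abs_pow_sub_pow_le_aux (1 / 4) (by norm_num) k (p * (1 - p)) (q * (1 - q))
    ha0 haM hb0 hbM
  have step : (k : ℝ) * (1 / 4) ^ (k - 1) * |p * (1 - p) - q * (1 - q)| ≤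
      (k : ℝ) / (n * (4 : ℝ) ^ ((k : ℤ) - 1)) := by
    have hz : ((4 : ℝ) : ℝ) ^ ((k : ℤ) - 1) = (4 : ℝ) ^ (k - 1) := by
      have : (k : ℤ) - 1 = ((k - 1 : ℕ) : ℤ) := by omega
      rw [this, zpow_natCast]
    rw [hz, show ((1 : ℝ) / 4) ^ (k - 1) = ((4 : ℝ) ^ (k - 1))⁻¹ by
      rw [one_div, inv_pow]]
    calc (k : ℝ) * ((4 : ℝ) ^ (k - 1))⁻¹ * |p * (1 - p) - q * (1 - q)|
        ≤ (k : ℝ) * ((4 : ℝ) ^ (k - 1))⁻¹ * (1 / n) :=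
          mul_le_mul_of_nonneg_left habs (by positivity)
      _ = (k : ℝ) / ((n : ℝ) * (4 : ℝ) ^ (k - 1)) := by
          field_simp
  have hnonneg : 0 ≤ 3 * (k : ℝ) * ((k : ℝ) - 1) * ((k : ℝ) - 2) /
      ((n : ℝ) ^ 3 * (2 : ℝ) ^ (2 * (k : ℤ) - 5)) := by
    apply div_nonneg
    · rcases Nat.lt_or_ge k 2 with h | h
      · interval_cases k <;> norm_num
      · have hk1 : (1 : ℝ) ≤ (k : ℝ) := by exact_mod_cast hk
        have hk2 : (2 : ℝ) ≤ (k : ℝ) := by exact_mod_cast h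
        have := mul_nonneg (mul_nonneg (by linarith : (0:ℝ) ≤ 3 * (k:ℝ))
          (by linarith : (0:ℝ) ≤ (k:ℝ) - 1)) (by linarith : (0:ℝ) ≤ (k:ℝ) - 2)
        linarith
    · positivity
  calc |(p * (1 - p)) ^ k - (q * (1 - q)) ^ k|
      ≤ (k : ℝ) * (1 / 4) ^ (k - 1) * |p * (1 - p) - q * (1 - q)| := main
    _ ≤ (k : ℝ) / (n * (4 : ℝ) ^ ((k : ℤ) - 1)) := step
    _ ≤ _ := le_add_of_nonneg_right hnonneg
end

section
/- Let p = (p_i)_{i∈ℕ} be a probability distribution on ℕ, X^n a sample of n i.i.d. observations from p with n ≥ 10, and p̂ the maximum likelihood estimator. Then P( sup over i with p_i < 1/n of (p̂_i(X^n) − p_i) ≥ log(n)/n ) ≤ 81/n. -/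
open MeasureTheory Real Filter

/-!
An index `i` with `p i < 1/n` can lift the supremum to `log n / n` only if its count reaches
`m = ⌈log n + n p_i⌉`; the supremum is attained because only finitely many indices are
observed and the others contribute `-p_i ≤ 0`. A union bound over the `C(n, m)` position sets
of size `m` gives `P(count_i ≥ m) ≤ C(n, m) p_i ^ m ≤ (n p_i) ^ m / m!`, and since `n p_i < 1`,
`m ≥ 3` and `n = exp (log n) ≤ exp (m - n p_i)`, this is at most `64 p_i / n`. Summing over `i`
gives `64 / n ≤ 81 / n`.
-/

open Finset
open scoped Nat

lemma eight_pow_le_factorial (k : ℕ) : 8 ^ k ≤ 64 * (k + 1)! := by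
  induction k with
  | zero => norm_num
  | succ k ih =>
    rcases le_or_gt k 5 with hk | hk
    · interval_cases k <;> norm_num [Nat.factorial]
    · calc 8 ^ (k + 1) = 8 ^ k * 8 := pow_succ 8 k
        _ ≤ 64 * (k + 1)! * (k + 2) := by gcongr; omega
        _ = 64 * (k + 2)! := by rw [Nat.factorial_succ (k + 1)]; ring

lemma Real.exp_two_le_eight : exp 2 ≤ 8 := by
  have : exp 2 = exp 1 ^ 2 := by rw [← exp_nat_mul]; norm_num
  rw [this]
  nlinarith [exp_one_lt_d9, exp_pos 1]

lemma Real.exp_sq_le_factorial (k : ℕ) : exp k ^ 2 ≤ 64 * (k + 1)! := by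
  calc exp k ^ 2 = exp 2 ^ k := by rw [← exp_nat_mul, ← exp_nat_mul]; ring_nf
    _ ≤ 8 ^ k := by gcongr; exact exp_two_le_eight
    _ ≤ 64 * (k + 1)! := mod_cast eight_pow_le_factorial k

lemma Real.mul_exp_le_exp_sub_one {t L m : ℝ} (h : L + t ≤ m) : t * exp L ≤ exp (m - 1) :=
  calc t * exp L ≤ exp (t - 1) * exp L := by
        gcongr; linarith [add_one_le_exp (t - 1)]
    _ = exp (t - 1 + L) := (exp_add _ _).symm
    _ ≤ exp (m - 1) := by gcongr; linarith

lemma choose_mul_pow_le {n m : ℕ} {q : ℝ} (hn : 0 < n) (hq : 0 ≤ q) (hnq : n * q ≤ 1)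
    (hm : 3 ≤ m) (hlog : log n + n * q ≤ m) :
    n.choose m * q ^ m ≤ 64 / n * q := by
  obtain ⟨k, rfl⟩ : ∃ k, m = k + 1 := ⟨m - 1, by omega⟩
  have hn' : (0 : ℝ) < n := mod_cast hn
  set t : ℝ := n * q
  have ht : 0 ≤ t := by positivity
  have htn : t * n ≤ exp k := by
    have := mul_exp_le_exp_sub_one (t := t) hlog
    rwa [exp_log hn', Nat.cast_succ, add_sub_cancel_right] at this
  calc n.choose (k + 1) * q ^ (k + 1) ≤ n ^ (k + 1) / (k + 1)! * q ^ (k + 1) := by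
        gcongr; exact Nat.choose_le_pow_div _ _
    _ = t ^ (k + 1) / (k + 1)! := by rw [mul_pow]; ring
    _ ≤ t ^ 3 / (k + 1)! := by gcongr ?_ / _; exact pow_le_pow_of_le_one ht hnq hm
    _ = q * (t * n) ^ 2 / n / (k + 1)! := by field_simp; ring
    _ ≤ q * exp k ^ 2 / n / (k + 1)! := by gcongr
    _ ≤ q * (64 * (k + 1)!) / n / (k + 1)! := by gcongr; exact exp_sq_le_factorial k
    _ = 64 / n * q := by field_simp

lemma MeasureTheory.Measure.pi_setOf_le_card_filter_mem_le {ι α : Type*} [Fintype ι]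
    [MeasurableSpace α] (μ : Measure α) [IsProbabilityMeasure μ] (A : Set α)
    [DecidablePred (· ∈ A)] (m : ℕ) :
    Measure.pi (fun _ : ι => μ) {x | m ≤ #{j | x j ∈ A}} ≤
      (Fintype.card ι).choose m * μ A ^ m := by
  classical
  have hcover : {x : ι → α | m ≤ #{j | x j ∈ A}} ⊆
      ⋃ S ∈ powersetCard m (univ : Finset ι), (S : Set ι).pi fun _ => A := by
    intro x hx
    obtain ⟨S, hS, hcard⟩ := exists_subset_card_eq hx
    simp only [Set.mem_iUnion, Set.mem_pi, mem_powersetCard, exists_prop]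
    exact ⟨S, ⟨subset_univ S, hcard⟩, fun j hj => (mem_filter.mp (hS hj)).2⟩
  calc _ ≤ ∑ S ∈ powersetCard m (univ : Finset ι),
          Measure.pi (fun _ : ι => μ) ((S : Set ι).pi fun _ => A) :=
        (measure_mono hcover).trans (measure_biUnion_finset_le _ _)
    _ = ∑ S ∈ powersetCard m (univ : Finset ι), μ A ^ m := by
        refine Finset.sum_congr rfl fun S hS => ?_
        rw [Measure.pi_pi_finset, prod_const, (mem_powersetCard.mp hS).2]
    _ = (Fintype.card ι).choose m * μ A ^ m := by
        rw [sum_const, card_powersetCard, card_univ, nsmul_eq_mul]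

/-- A real supremum need not be attained; it is once only finitely many terms are positive. -/
lemma Real.exists_le_of_le_iSup_of_finite {ι : Type*} {f : ι → ℝ} {s : Set ι}
    (hs : s.Finite) (hf : ∀ i ∉ s, f i ≤ 0) {c : ℝ} (hc : 0 < c) (h : c ≤ ⨆ i, f i) :
    ∃ i, c ≤ f i := by
  by_contra! hlt
  obtain ⟨B, hB0, hBc, hfB⟩ : ∃ B, 0 ≤ B ∧ B < c ∧ ∀ i, f i ≤ B := by
    rcases s.eq_empty_or_nonempty with rfl | hne
    · exact ⟨0, le_rfl, hc, fun i => hf i (Set.notMem_empty i)⟩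
    obtain ⟨i₀, -, hi₀⟩ := Set.exists_max_image s f hs hne
    refine ⟨max 0 (f i₀), le_max_left _ _, max_lt hc (hlt i₀), fun i => ?_⟩
    by_cases hi : i ∈ s
    · exact (hi₀ i hi).trans (le_max_right _ _)
    · exact (hf i hi).trans (le_max_left _ _)
  exact hBc.not_ge (h.trans (Real.iSup_le hfB hB0))

lemma sampleMeasure_ceil_le_count_le {p : PMF ℕ} {n : ℕ} (hn : 10 ≤ n) {i : ℕ}
    (hi : (p i).toReal < 1 / n) :
    sampleMeasure p n {x | ⌈log n + n * (p i).toReal⌉₊ ≤ #{j | x j = i}} ≤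
      ENNReal.ofReal (81 / n) * p i := by
  have hn0 : (0 : ℝ) < n := by positivity
  have hlog : 2 < log n := by
    rw [lt_log_iff_exp_lt hn0]
    have : (10 : ℝ) ≤ n := mod_cast hn
    linarith [exp_two_le_eight]
  set q := (p i).toReal
  set m := ⌈log n + n * q⌉₊
  have hq : 0 ≤ q := ENNReal.toReal_nonneg
  have hpi : p i = ENNReal.ofReal q := (ENNReal.ofReal_toReal (p.apply_ne_top i)).symm
  have hm : 3 ≤ m := Nat.lt_ceil.mpr (by push_cast; nlinarith)
  calc _ ≤ (Fintype.card (Fin n)).choose m * p.toMeasure {i} ^ m := by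
        simpa only [sampleMeasure, Set.mem_singleton_iff] using
          Measure.pi_setOf_le_card_filter_mem_le p.toMeasure {i} m
    _ = ENNReal.ofReal (n.choose m * q ^ m) := by
        rw [Fintype.card_fin, p.toMeasure_apply_singleton i (measurableSet_singleton i), hpi,
          ENNReal.ofReal_mul (by positivity), ENNReal.ofReal_pow hq, ENNReal.ofReal_natCast]
    _ ≤ ENNReal.ofReal (64 / n * q) := by
        refine ENNReal.ofReal_le_ofReal (choose_mul_pow_le (by omega) hq ?_ hm (Nat.le_ceil _))
        rw [lt_div_iff₀ hn0] at hi
        linarith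
    _ ≤ ENNReal.ofReal (81 / n * q) := by gcongr; norm_num
    _ = ENNReal.ofReal (81 / n) * p i := by rw [ENNReal.ofReal_mul (by positivity), hpi]

/-- light-masses bound in the proof of Theorem 3: for `n ≥ 10`,
`P( sup_{i : p_i < 1/n} (p̂_i - p_i) ≥ log(n)/n ) ≤ 81/n`. -/
theorem stmt_13 (p : PMF ℕ) (n : ℕ) (hn : 10 ≤ n) :
    sampleMeasure p n {x |
        Real.log n / n ≤
          ⨆ i : {i : ℕ // (p i).toReal < 1 / n}, (mle n x i - (p (i : ℕ)).toReal)} ≤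
      ENNReal.ofReal (81 / n) := by
  have hn0 : (0 : ℝ) < n := by positivity
  have hlog : 0 < log n / n := div_pos (log_pos (by exact_mod_cast (by omega : 1 < n))) hn0
  have hevent : {x : Fin n → ℕ | log n / n ≤
        ⨆ i : {i : ℕ // (p i).toReal < 1 / n}, (mle n x i - (p (i : ℕ)).toReal)} ⊆
      ⋃ i : {i : ℕ // (p i).toReal < 1 / n},
        {x | ⌈log n + n * (p i).toReal⌉₊ ≤ #{j | x j = i}} := by
    intro x hx
    have hunobserved (i : {i : ℕ // (p i).toReal < 1 / n}) (hi : (i : ℕ) ∉ Set.range x) :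
        mle n x i - (p i).toReal ≤ 0 := by
      have : #{j | x j = i} = 0 := card_eq_zero.mpr <| filter_eq_empty_iff.mpr
        fun j _ hj => hi ⟨j, hj⟩
      simp [mle, this]
    obtain ⟨i, hi⟩ := Real.exists_le_of_le_iSup_of_finite
      ((Set.finite_range x).preimage Subtype.val_injective.injOn) hunobserved hlog hx
    refine Set.mem_iUnion.mpr ⟨i, Nat.ceil_le.mpr ?_⟩
    rw [mle, le_sub_iff_add_le, div_add' _ _ _ hn0.ne', div_le_div_iff_of_pos_right hn0] at hi
    linarith
  calc _ ≤ ∑' i : {i : ℕ // (p i).toReal < 1 / n},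
          sampleMeasure p n {x | ⌈log n + n * (p i).toReal⌉₊ ≤ #{j | x j = i}} :=
        (measure_mono hevent).trans (measure_iUnion_le _)
    _ ≤ ∑' i : {i : ℕ // (p i).toReal < 1 / n}, ENNReal.ofReal (81 / n) * p i :=
        ENNReal.tsum_le_tsum fun i => sampleMeasure_ceil_le_count_le hn i.2
    _ ≤ ∑' i, ENNReal.ofReal (81 / n) * p i :=
        ENNReal.tsum_comp_le_tsum_of_injective Subtype.val_injective _
    _ = ENNReal.ofReal (81 / n) := by rw [ENNReal.tsum_mul_left, PMF.tsum_coe, mul_one]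
end

section
/- Let p = (p_i)_{i∈ℕ} be a probability distribution on ℕ, X^n a sample of n ≥ 81 i.i.d. observations from p, and p̂ the maximum likelihood estimator. For δ ∈ (0,1), define a = (4/(3n))·log(2(n+1)/δ) + log(n)/n and b = 2√( log(n+1)/n + (1/n)·log(2/δ) ), and let v̂* = sup_{i∈ℕ} p̂_i(1−p̂_i). Then with probability at least 1 − δ − 81/n, sup_{i∈ℕ} |p_i − p̂_i| ≤ a + (3/2)b² + b√a + (3/2)·b·√(v̂*). -/
/-!
Put `β = log (2 (n + 1) / δ) / n`, so that `exp (-n β) = δ / (2 (n + 1))`, and let `q̂` be the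
empirical frequency of a set `S` of probability `q ≤ 1/2`. If `q ≥ 2β`, two Chernoff bounds give
`|q - q̂| ≤ 2 √(q β)` outside an event of probability `2 exp (-n β)`; since
`q (1 - q) ≤ q̂ (1 - q̂) + |q - q̂|`, solving the resulting quadratic inequality in `|q - q̂|` gives
`|q - q̂| ≤ 8β + √(8β q̂ (1 - q̂))`. If `q < 2β`, the same bound follows from `q̂ < 8β`, which fails
with probability `O(n q exp (-4 n β))`: Markov's inequality for `exp (count) - 1` makes this linear
in `q`. Either way the exceptional event has probability at most `q exp (-n β) / β`. Applied to
`S = {i}` or `{i}ᶜ`, these bounds sum over `i` to `exp (-n β) / β ≤ δ`, and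
`8β + √(8β v̂*)` is dominated by the stated bound.
-/

open MeasureTheory Real Filter

open ProbabilityTheory Finset

lemma mul_exp_sub_one_le {q t : ℝ} (hq : 0 ≤ q) (ht : |t| ≤ 1) :
    q * (exp t - 1) ≤ q * t + q * t ^ 2 := by
  have := (abs_le.1 (abs_exp_sub_one_sub_id_le ht)).2
  nlinarith

lemma exp_sub_one_le_mul_exp (w : ℝ) : exp w - 1 ≤ w * exp w := by
  have h := mul_le_mul_of_nonneg_right (add_one_le_exp (-w)) (exp_pos w).le
  rw [← exp_add, neg_add_cancel, exp_zero] at h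
  linarith

lemma four_mul_mul_exp_neg_le {n q β : ℝ} (hq : 0 ≤ q) (hβ : 0 < β) (hnβ : 0 ≤ n * β) :
    4 * n * q * exp (-(4 * (n * β))) ≤ q * exp (-(n * β)) / β := by
  have hexp : 4 * (n * β) ≤ exp (3 * (n * β)) := by
    nlinarith [quadratic_le_exp_of_nonneg (x := 3 * (n * β)) (by linarith)]
  calc 4 * n * q * exp (-(4 * (n * β)))
      = q * exp (-(n * β)) / β * (4 * (n * β) * exp (-(3 * (n * β)))) := by
        rw [show -(4 * (n * β)) = -(n * β) + -(3 * (n * β)) by ring, exp_add]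
        field_simp
    _ ≤ q * exp (-(n * β)) / β * 1 := by
        gcongr
        rw [exp_neg, ← div_eq_mul_inv, div_le_one (exp_pos _)]
        exact hexp
    _ = _ := mul_one _

lemma le_sqrt_add_of_sq_le_add_mul {z A B : ℝ} (hB : 0 ≤ B) (h : z ^ 2 ≤ A + B * z) :
    z ≤ √A + B := by
  rcases le_total z B with hzB | hBz
  · linarith [sqrt_nonneg A]
  · have hsq : (z - B) ^ 2 ≤ A := by nlinarith
    linarith [le_abs_self (z - B), abs_le_sqrt hsq]

lemma mul_one_sub_le_add_abs {q f : ℝ} (hq0 : 0 ≤ q) (hq1 : q ≤ 1) (hf0 : 0 ≤ f) (hf1 : f ≤ 1) :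
    q * (1 - q) ≤ f * (1 - f) + |q - f| := by
  have hfac : |1 - q - f| ≤ 1 := abs_le.2 ⟨by linarith, by linarith⟩
  have hprod : (q - f) * (1 - q - f) ≤ |q - f| :=
    calc (q - f) * (1 - q - f) ≤ |(q - f) * (1 - q - f)| := le_abs_self _
      _ = |q - f| * |1 - q - f| := abs_mul _ _
      _ ≤ |q - f| := mul_le_of_le_one_right (abs_nonneg _) hfac
  nlinarith

noncomputable def bernsteinRadius (β v : ℝ) : ℝ :=
  8 * β + √(8 * β * v)

lemma abs_sub_le_of_abs_sub_le_two_sqrt {β q f : ℝ} (hβ : 0 ≤ β) (hq0 : 0 ≤ q) (hq : q ≤ 1 / 2)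
    (hf0 : 0 ≤ f) (hf1 : f ≤ 1) (h : |q - f| ≤ 2 * √(q * β)) :
    |q - f| ≤ bernsteinRadius β (f * (1 - f)) := by
  have hvar := mul_one_sub_le_add_abs hq0 (by linarith) hf0 hf1
  have hsq : |q - f| ^ 2 ≤ 8 * β * (f * (1 - f)) + 8 * β * |q - f| :=
    calc |q - f| ^ 2 ≤ (2 * √(q * β)) ^ 2 := pow_le_pow_left₀ (abs_nonneg _) h 2
      _ = 4 * q * β := by rw [mul_pow, sq_sqrt (by positivity)]; ring
      _ ≤ 8 * β * (q * (1 - q)) := by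
          nlinarith [mul_nonneg (mul_nonneg hβ hq0) (by linarith : (0 : ℝ) ≤ 1 - 2 * q)]
      _ ≤ 8 * β * (f * (1 - f) + |q - f|) := by gcongr
      _ = _ := by ring
  unfold bernsteinRadius
  linarith [le_sqrt_add_of_sq_le_add_mul (by positivity) hsq]

lemma ne_zero_of_one_le_natCast_mul {n : ℕ} {β : ℝ} (h : 1 ≤ n * β) : n ≠ 0 := by
  rintro rfl
  norm_num at h

section SampleCount

variable {α : Type*} {n : ℕ}

noncomputable def sampleCount (S : Set α) (x : Fin n → α) : ℝ :=
  ∑ j, S.indicator 1 (x j)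

lemma sampleCount_nonneg (S : Set α) (x : Fin n → α) : 0 ≤ sampleCount S x :=
  sum_nonneg fun _ _ => Set.indicator_nonneg (fun _ _ => zero_le_one) _

lemma sampleCount_le (S : Set α) (x : Fin n → α) : sampleCount S x ≤ n := by
  calc sampleCount S x ≤ ∑ _j : Fin n, (1 : ℝ) :=
        sum_le_sum fun j _ => Set.indicator_apply_le' (fun _ => le_rfl) (fun _ => zero_le_one)
    _ = n := by simp

lemma sampleCount_compl (S : Set α) (x : Fin n → α) :
    sampleCount Sᶜ x = n - sampleCount S x := by
  simp [sampleCount, eq_sub_iff_add_eq, ← sum_add_distrib]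

noncomputable def sampleFreq (S : Set α) (x : Fin n → α) : ℝ :=
  sampleCount S x / n

lemma sampleFreq_nonneg (S : Set α) (x : Fin n → α) : 0 ≤ sampleFreq S x :=
  div_nonneg (sampleCount_nonneg S x) n.cast_nonneg

lemma sampleFreq_le_one (S : Set α) (x : Fin n → α) : sampleFreq S x ≤ 1 :=
  div_le_one_of_le₀ (sampleCount_le S x) n.cast_nonneg

lemma sampleFreq_compl (hn : n ≠ 0) (S : Set α) (x : Fin n → α) :
    sampleFreq Sᶜ x = 1 - sampleFreq S x := by
  rw [sampleFreq, sampleFreq, sampleCount_compl]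
  field_simp

variable [MeasurableSpace α]

lemma measurable_sampleCount {S : Set α} (hS : MeasurableSet S) :
    Measurable (sampleCount (n := n) S) :=
  Finset.measurable_sum _ fun j _ => (measurable_one.indicator hS).comp (measurable_pi_apply j)

variable {μ : Measure α} [IsProbabilityMeasure μ] {S : Set α}

lemma mgf_sampleCount (hS : MeasurableSet S) (t : ℝ) :
    mgf (sampleCount S) (Measure.pi fun _ : Fin n => μ) t = (1 + μ.real S * (exp t - 1)) ^ n := by
  have hprod (x : Fin n → α) :
      exp (t * sampleCount S x) = ∏ j, (1 + S.indicator (fun _ => exp t - 1) (x j)) := by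
    rw [sampleCount, mul_sum, exp_sum]
    refine prod_congr rfl fun j _ => ?_
    by_cases hx : x j ∈ S <;> simp [hx]
  have hpow := integral_fintype_prod_eq_pow (ι := Fin n) (μ := μ)
    (fun y => 1 + S.indicator (fun _ => exp t - 1) y)
  beta_reduce at hpow
  simp only [mgf, hprod]
  rw [hpow, Fintype.card_fin,
    integral_add (integrable_const 1) ((integrable_const _).indicator hS),
    integral_indicator_const _ hS]
  simp [mul_comm]

lemma integrable_exp_mul_sampleCount (hS : MeasurableSet S) (t : ℝ) :
    Integrable (fun x => exp (t * sampleCount S x)) (Measure.pi fun _ : Fin n => μ) := by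
  refine .of_mem_Icc 0 (exp (|t| * n)) ((measurable_sampleCount hS).const_mul t).exp.aemeasurable
    (ae_of_all _ fun x => ⟨(exp_pos _).le, exp_le_exp.2 ?_⟩)
  calc t * sampleCount S x ≤ |t| * sampleCount S x :=
        mul_le_mul_of_nonneg_right (le_abs_self t) (sampleCount_nonneg S x)
    _ ≤ |t| * n := mul_le_mul_of_nonneg_left (sampleCount_le S x) (abs_nonneg t)

lemma mgf_sampleCount_le (hS : MeasurableSet S) (t : ℝ) :
    mgf (sampleCount S) (Measure.pi fun _ : Fin n => μ) t ≤ exp (n * (μ.real S * (exp t - 1))) := by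
  have hq : μ.real S ≤ 1 := measureReal_le_one
  rw [mgf_sampleCount hS, exp_nat_mul]
  refine pow_le_pow_left₀ ?_ (by linarith [add_one_le_exp (μ.real S * (exp t - 1))]) n
  nlinarith [exp_pos t, measureReal_nonneg (μ := μ) (s := S)]

lemma measureReal_sampleCount_ge_le (hS : MeasurableSet S) (u : ℝ) {t : ℝ} (ht : 0 ≤ t) :
    (Measure.pi fun _ : Fin n => μ).real {x | u ≤ sampleCount S x} ≤
      exp (n * (μ.real S * (exp t - 1)) - t * u) :=
  calc _ ≤ exp (-t * u) * mgf (sampleCount S) (Measure.pi fun _ : Fin n => μ) t :=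
        measure_ge_le_exp_mul_mgf u ht (integrable_exp_mul_sampleCount hS t)
    _ ≤ exp (-t * u) * exp (n * (μ.real S * (exp t - 1))) := by
        gcongr; exact mgf_sampleCount_le hS t
    _ = _ := by rw [← exp_add]; ring_nf

lemma measureReal_sampleCount_le_le (hS : MeasurableSet S) (u : ℝ) {t : ℝ} (ht : t ≤ 0) :
    (Measure.pi fun _ : Fin n => μ).real {x | sampleCount S x ≤ u} ≤
      exp (n * (μ.real S * (exp t - 1)) - t * u) :=
  calc _ ≤ exp (-t * u) * mgf (sampleCount S) (Measure.pi fun _ : Fin n => μ) t :=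
        measure_le_le_exp_mul_mgf u ht (integrable_exp_mul_sampleCount hS t)
    _ ≤ exp (-t * u) * exp (n * (μ.real S * (exp t - 1))) := by
        gcongr; exact mgf_sampleCount_le hS t
    _ = _ := by rw [← exp_add]; ring_nf

lemma measureReal_sampleCount_ge_le_div (hS : MeasurableSet S) {u : ℝ} (hu : 0 < u) :
    (Measure.pi fun _ : Fin n => μ).real {x | u ≤ sampleCount S x} ≤
      (mgf (sampleCount S) (Measure.pi fun _ : Fin n => μ) 1 - 1) / (exp u - 1) := by
  have hu1 : 0 < exp u - 1 := by linarith [add_one_le_exp u]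
  rw [le_div_iff₀ hu1, mul_comm]
  have hmarkov := mul_meas_ge_le_integral_of_nonneg (μ := Measure.pi fun _ : Fin n => μ)
    (f := fun x => exp (1 * sampleCount S x) - 1)
    (ae_of_all _ fun x => by
      simpa using one_le_exp (mul_nonneg zero_le_one (sampleCount_nonneg S x)))
    ((integrable_exp_mul_sampleCount hS 1).sub (integrable_const 1)) (exp u - 1)
  rw [integral_sub (integrable_exp_mul_sampleCount hS 1) (integrable_const 1)] at hmarkov
  refine le_trans ?_ (by simpa [mgf] using hmarkov)
  gcongr

lemma measureReal_sampleFreq_ge_le_of_le_two_mul (hS : MeasurableSet S) {β : ℝ}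
    (hq : μ.real S ≤ 2 * β) (hnβ : 1 ≤ n * β) :
    (Measure.pi fun _ : Fin n => μ).real {x | 8 * β ≤ sampleFreq S x} ≤
      4 * n * μ.real S * exp (-(4 * (n * β))) := by
  have hn : (0 : ℝ) < n := by positivity [ne_zero_of_one_le_natCast_mul hnβ]
  set q := μ.real S
  set y := n * β
  have hq0 : 0 ≤ q := measureReal_nonneg
  have he : exp 1 - 1 ≤ 2 := by linarith [exp_one_lt_d9]
  set w := n * (q * (exp 1 - 1))
  have hnum : mgf (sampleCount S) (Measure.pi fun _ : Fin n => μ) 1 - 1 ≤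
      2 * (n * q) * exp (4 * y) :=
    calc _ ≤ exp w - 1 := by linarith [mgf_sampleCount_le (n := n) (μ := μ) hS 1]
      _ ≤ w * exp w := exp_sub_one_le_mul_exp w
      _ ≤ 2 * (n * q) * exp (4 * y) := by
          have hw : w ≤ 2 * (n * q) := by
            rw [show w = n * q * (exp 1 - 1) by ring]
            nlinarith [mul_nonneg hn.le hq0]
          gcongr
          nlinarith
  have hden : exp (8 * y) / 2 ≤ exp (8 * y) - 1 := by linarith [add_one_le_exp (8 * y)]
  have hsub : {x : Fin n → α | 8 * β ≤ sampleFreq S x} ⊆ {x | 8 * y ≤ sampleCount S x} :=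
    fun x (hx : 8 * β ≤ sampleCount S x / n) =>
      show 8 * (n * β) ≤ sampleCount S x by rw [le_div_iff₀ hn] at hx; linarith
  calc _ ≤ _ := measureReal_mono hsub
    _ ≤ (mgf (sampleCount S) (Measure.pi fun _ : Fin n => μ) 1 - 1) / (exp (8 * y) - 1) :=
        measureReal_sampleCount_ge_le_div hS (by linarith)
    _ ≤ 2 * (n * q) * exp (4 * y) / (exp (8 * y) / 2) := by gcongr
    _ = 4 * n * q * exp (-(4 * y)) := by
        rw [show 8 * y = 4 * y + 4 * y by ring, exp_add, exp_neg]
        field_simp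
        ring

lemma measureReal_abs_sub_sampleFreq_gt_le (hS : MeasurableSet S) (hn : n ≠ 0) {β : ℝ}
    (hβ : 0 < β) (hq : β ≤ μ.real S) :
    (Measure.pi fun _ : Fin n => μ).real {x | 2 * √(μ.real S * β) < |μ.real S - sampleFreq S x|} ≤
      2 * exp (-(n * β)) := by
  set q := μ.real S
  set g := √(q * β)
  have hnR : (0 : ℝ) < n := by positivity
  have hq0 : 0 < q := hβ.trans_le hq
  have hg : g ^ 2 = q * β := sq_sqrt (by positivity)
  -- `l = √(β / q)` makes `q l² = l g = β`, so both Chernoff exponents are at most `n (β - 2β)`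
  set l := g / q
  have hl0 : 0 ≤ l := by positivity
  have hlg : l * g = β := by rw [div_mul_eq_mul_div, ← sq, hg]; field_simp
  have hql : q * l ^ 2 = β := by rw [div_pow, hg]; field_simp
  have hl2 : l ^ 2 ≤ 1 := by nlinarith
  have hl1 : l ≤ 1 := by nlinarith
  have hsub : {x : Fin n → α | 2 * g < |q - sampleFreq S x|} ⊆
      {x | n * (q + 2 * g) ≤ sampleCount S x} ∪ {x | sampleCount S x ≤ n * (q - 2 * g)} := by
    intro x (hx : 2 * g < |q - sampleCount S x / n|)
    rcases lt_abs.1 hx with h | h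
    · refine Or.inr (show sampleCount S x ≤ _ from ?_)
      rw [← div_le_iff₀' hnR]
      linarith
    · refine Or.inl (show _ ≤ sampleCount S x from ?_)
      rw [← le_div_iff₀' hnR]
      linarith
  have hup := measureReal_sampleCount_ge_le (n := n) (μ := μ) hS (n * (q + 2 * g)) hl0
  have hlo := measureReal_sampleCount_le_le (n := n) (μ := μ) hS (n * (q - 2 * g))
    (neg_nonpos.2 hl0)
  have hexp_up := mul_exp_sub_one_le hq0.le (t := l) (by rwa [abs_of_nonneg hl0])
  have hexp_lo := mul_exp_sub_one_le hq0.le (t := -l) (by rwa [abs_neg, abs_of_nonneg hl0])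
  calc _ ≤ _ := measureReal_mono hsub
    _ ≤ _ := measureReal_union_le _ _
    _ ≤ exp (-(n * β)) + exp (-(n * β)) := by
        gcongr
        · exact hup.trans (exp_le_exp.2 (by nlinarith))
        · exact hlo.trans (exp_le_exp.2 (by nlinarith))
    _ = 2 * exp (-(n * β)) := by ring

lemma measureReal_sampleFreq_dev_le (hS : MeasurableSet S) {β : ℝ} (hβ : 0 < β)
    (hq : μ.real S ≤ 1 / 2) (hnβ : 1 ≤ n * β) :
    (Measure.pi fun _ : Fin n => μ).real
        {x | bernsteinRadius β (sampleFreq S x * (1 - sampleFreq S x)) <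
          |μ.real S - sampleFreq S x|} ≤
      μ.real S * exp (-(n * β)) / β := by
  set q := μ.real S
  have hq0 : 0 ≤ q := measureReal_nonneg
  rcases lt_or_ge q (2 * β) with hsmall | hbig
  · have hsub : {x : Fin n → α | bernsteinRadius β (sampleFreq S x * (1 - sampleFreq S x)) <
          |q - sampleFreq S x|} ⊆ {x | 8 * β ≤ sampleFreq S x} := by
      intro x (hx : _ < |q - sampleFreq S x|)
      have hdev := (le_add_of_nonneg_right (sqrt_nonneg _)).trans_lt hx
      rcases lt_abs.1 hdev with h | h
      · linarith [sampleFreq_nonneg S x]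
      · exact (show 8 * β ≤ sampleFreq S x by linarith)
    calc _ ≤ _ := measureReal_mono hsub
      _ ≤ 4 * n * q * exp (-(4 * (n * β))) :=
          measureReal_sampleFreq_ge_le_of_le_two_mul hS hsmall.le hnβ
      _ ≤ _ := four_mul_mul_exp_neg_le hq0 hβ (by linarith)
  · have hsub : {x : Fin n → α | bernsteinRadius β (sampleFreq S x * (1 - sampleFreq S x)) <
          |q - sampleFreq S x|} ⊆ {x | 2 * √(q * β) < |q - sampleFreq S x|} := by
      intro x (hx : _ < |q - sampleFreq S x|)
      by_contra h
      exact hx.not_ge (abs_sub_le_of_abs_sub_le_two_sqrt hβ.le hq0 hq (sampleFreq_nonneg S x)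
        (sampleFreq_le_one S x) (not_lt.1 h))
    calc _ ≤ _ := measureReal_mono hsub
      _ ≤ 2 * exp (-(n * β)) :=
          measureReal_abs_sub_sampleFreq_gt_le hS (ne_zero_of_one_le_natCast_mul hnβ) hβ
            (by linarith)
      _ = 2 * β * exp (-(n * β)) / β := by field_simp
      _ ≤ _ := by gcongr

end SampleCount

instance inst_s14 (p : PMF ℕ) (n : ℕ) : IsProbabilityMeasure (sampleMeasure p n) := by
  unfold sampleMeasure; infer_instance

lemma mle_eq_sampleFreq (n : ℕ) (x : Fin n → ℕ) (i : ℕ) : mle n x i = sampleFreq {i} x := by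
  simp only [mle, sampleFreq, sampleCount, natCast_card_filter]
  congr 1
  refine sum_congr rfl fun j _ => ?_
  by_cases h : x j = i <;> simp [h]

lemma measureReal_mle_dev_le (p : PMF ℕ) {n : ℕ} {β : ℝ} (hβ : 0 < β) (hnβ : 1 ≤ n * β)
    (i : ℕ) :
    (sampleMeasure p n).real
        {x | bernsteinRadius β (mle n x i * (1 - mle n x i)) < |(p i).toReal - mle n x i|} ≤
      (p i).toReal * exp (-(n * β)) / β := by
  have hpi : p.toMeasure.real {i} = (p i).toReal := by
    simp [measureReal_def, PMF.toMeasure_apply_singleton]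
  unfold sampleMeasure
  rcases le_total (p i).toReal (1 / 2) with h | h
  · have := measureReal_sampleFreq_dev_le (μ := p.toMeasure) (measurableSet_singleton i) hβ
      (hpi ▸ h) hnβ
    simpa only [hpi, ← mle_eq_sampleFreq] using this
  · have hc : p.toMeasure.real {i}ᶜ = 1 - (p i).toReal := by
      rw [measureReal_compl (measurableSet_singleton i), probReal_univ, hpi]
    have := measureReal_sampleFreq_dev_le (μ := p.toMeasure)
      (measurableSet_singleton i).compl hβ (by rw [hc]; linarith) hnβ
    simp only [hc, sampleFreq_compl (ne_zero_of_one_le_natCast_mul hnβ), ← mle_eq_sampleFreq,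
      sub_sub_cancel, sub_sub_sub_cancel_left, abs_sub_comm (mle n _ i), mul_comm (1 - mle n _ i)]
      at this
    refine this.trans ?_
    gcongr
    linarith

lemma measure_iUnion_mle_dev_le (p : PMF ℕ) {n : ℕ} {β : ℝ} (hβ : 0 < β) (hnβ : 1 ≤ n * β) :
    sampleMeasure p n
        (⋃ i, {x | bernsteinRadius β (mle n x i * (1 - mle n x i)) < |(p i).toReal - mle n x i|}) ≤
      ENNReal.ofReal (exp (-(n * β)) / β) := by
  set c := exp (-(n * β)) / β
  calc _ ≤ ∑' i, sampleMeasure p n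
          {x | bernsteinRadius β (mle n x i * (1 - mle n x i)) < |(p i).toReal - mle n x i|} :=
        measure_iUnion_le _
    _ ≤ ∑' i, p i * ENNReal.ofReal c := ENNReal.tsum_le_tsum fun i => by
        rw [← ofReal_measureReal (measure_ne_top _ _)]
        calc _ ≤ ENNReal.ofReal ((p i).toReal * c) := by
              rw [← mul_div_assoc]
              exact ENNReal.ofReal_le_ofReal (measureReal_mle_dev_le p hβ hnβ i)
          _ = p i * ENNReal.ofReal c := by
              rw [ENNReal.ofReal_mul ENNReal.toReal_nonneg,
                ENNReal.ofReal_toReal (p.apply_ne_top i)]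
    _ = ENNReal.ofReal c := by rw [ENNReal.tsum_mul_right, p.tsum_coe, one_mul]

lemma ciSup_le_bernsteinRadius_ciSup {ι : Type*} [Nonempty ι] {z m : ι → ℝ} {β : ℝ}
    (hβ : 0 ≤ β) (h : ∀ i, z i ≤ bernsteinRadius β (m i * (1 - m i))) :
    ⨆ i, z i ≤ bernsteinRadius β (⨆ i, m i * (1 - m i)) := by
  have hbdd : BddAbove (Set.range fun i => m i * (1 - m i)) :=
    ⟨1 / 4, by rintro _ ⟨i, rfl⟩; nlinarith [sq_nonneg (m i - 1 / 2)]⟩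
  refine ciSup_le fun i => (h i).trans ?_
  unfold bernsteinRadius
  gcongr
  exact le_ciSup hbdd i

lemma bernsteinRadius_le {β a : ℝ} (v : ℝ) (hβ : 0 ≤ β) (ha : 4 / 3 * β ≤ a) :
    bernsteinRadius β v ≤ a + 3 * (2 * √β) ^ 2 / 2 + 2 * √β * √a + 3 * (2 * √β) * √v / 2 := by
  have hsq : (2 * √β) ^ 2 = 4 * β := by rw [mul_pow, sq_sqrt hβ]; ring
  have hβa : β ≤ √β * √a := by
    calc β = √β * √β := (mul_self_sqrt hβ).symm
      _ ≤ √β * √a := by gcongr; linarith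
  have h8 : √(8 * β) ≤ 3 * √β := by
    rw [show 3 * √β = √(3 ^ 2 * β) by rw [sqrt_mul (by norm_num), sqrt_sq (by norm_num)]]
    exact sqrt_le_sqrt (by linarith)
  have hv3 : √(8 * β * v) ≤ 3 * √β * √v := by
    rw [sqrt_mul (by positivity)]
    gcongr
  unfold bernsteinRadius
  nlinarith

lemma natCast_mul_log_div_add_eq_log {n : ℕ} (hn : n ≠ 0) {δ : ℝ} (hδ : 0 < δ) :
    n * (log ((n : ℝ) + 1) / n + 1 / n * log (2 / δ)) = log (2 * (n + 1) / δ) := by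
  rw [show 2 * ((n : ℝ) + 1) / δ = (n + 1) * (2 / δ) by ring,
    log_mul (by positivity) (by positivity)]
  field_simp

/-- Theorem 4, empirical bound: for `n ≥ 81` and `δ ∈ (0,1)`, with
`a = (4/(3n)) log(2(n+1)/δ) + log(n)/n`, `b = 2√(log(n+1)/n + (1/n) log(2/δ))` and
`v̂* = sup_i p̂_i(1-p̂_i)`, with probability at least `1 - δ - 81/n`,
`sup_i |p_i - p̂_i| ≤ a + (3/2)b² + b√a + (3/2) b √(v̂*)`. -/
theorem stmt_14 (p : PMF ℕ) (n : ℕ) (hn : 81 ≤ n) (δ : ℝ) (hδ : δ ∈ Set.Ioo (0 : ℝ) 1) :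
    ENNReal.ofReal (1 - δ - 81 / n) ≤
      sampleMeasure p n {x |
        (⨆ i : ℕ, |(p i).toReal - mle n x i|) ≤
          (4 / (3 * n) * Real.log (2 * (n + 1) / δ) + Real.log n / n) +
            3 * (2 * Real.sqrt (Real.log ((n : ℝ) + 1) / n + (1 / n) * Real.log (2 / δ))) ^ 2 / 2 +
            (2 * Real.sqrt (Real.log ((n : ℝ) + 1) / n + (1 / n) * Real.log (2 / δ))) *
              Real.sqrt (4 / (3 * n) * Real.log (2 * (n + 1) / δ) + Real.log n / n) +
            3 * (2 * Real.sqrt (Real.log ((n : ℝ) + 1) / n + (1 / n) * Real.log (2 / δ))) *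
              Real.sqrt (⨆ i : ℕ, mle n x i * (1 - mle n x i)) / 2} := by
  obtain ⟨hδ0, hδ1⟩ := hδ
  have hn0 : n ≠ 0 := by omega
  have hnR : (0 : ℝ) < n := by positivity
  set β := log ((n : ℝ) + 1) / n + 1 / n * log (2 / δ)
  have hnβ : n * β = log (2 * (n + 1) / δ) := natCast_mul_log_div_add_eq_log hn0 hδ0
  have hlog : 1 ≤ log (2 * (n + 1) / δ) := by
    rw [le_log_iff_exp_le (by positivity), le_div_iff₀ hδ0]
    nlinarith [exp_one_lt_d9, (show (81 : ℝ) ≤ n by exact_mod_cast hn)]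
  have hβ : 0 < β := pos_of_mul_pos_right (hnβ ▸ one_pos.trans_le hlog) hnR.le
  have hconf : exp (-(n * β)) / β ≤ δ := by
    rw [div_le_iff₀ hβ, hnβ, exp_neg, exp_log (by positivity), inv_div]
    rw [div_le_iff₀ (by positivity)]
    nlinarith [mul_pos hδ0 hβ]
  have ha : 4 / 3 * β ≤ 4 / (3 * n) * log (2 * (n + 1) / δ) + log n / n := by
    rw [← hnβ]
    field_simp
    linarith [log_natCast_nonneg n]
  have hbad := measure_iUnion_mle_dev_le p hβ (hnβ ▸ hlog)
  calc ENNReal.ofReal (1 - δ - 81 / n) ≤ 1 - ENNReal.ofReal δ := by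
        rw [← ENNReal.ofReal_one, ← ENNReal.ofReal_sub _ hδ0.le]
        have h81 : (0 : ℝ) ≤ 81 / n := by positivity
        exact ENNReal.ofReal_le_ofReal (by linarith)
    _ ≤ 1 - sampleMeasure p n _ := tsub_le_tsub_left (hbad.trans (ENNReal.ofReal_le_ofReal hconf)) 1
    _ = sampleMeasure p n _ := (prob_compl_eq_one_sub (Set.to_countable _).measurableSet).symm
    _ ≤ _ := measure_mono fun x hx => by
        simp only [Set.compl_iUnion, Set.mem_iInter, Set.mem_compl_iff, Set.mem_ofPred_eq,
          not_lt] at hx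
        exact (ciSup_le_bernsteinRadius_ciSup hβ.le hx).trans (bernsteinRadius_le _ hβ.le ha)
end

section
/- For an integer n ≥ 2, define probability distributions p and q on {1,…,n} by p_1 = log(n)/(2n·log(log(n))), p_i = (1−p_1)/(n−1) for i > 1, and q_2 = p_1, q_i = p_2 for i ≠ 2. Then: (1) there exists c > 0 such that for all sufficiently large n, sup_i |p_i − q_i| ≥ c·log(n)/(n·log(log(n))); and (2) lim_{n→∞} (n/log(n)) · D(p‖q) = 1/2, where D(p‖q) = Σ_i p_i·log(p_i/q_i) is the Kullback–Leibler divergence. -/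
/-! With `L = log n` and `M = log L`, the divergence collapses to `(p₁ - p₂) log (p₁ / p₂)`
because `q` agrees with `p` off `{1, 2}`. Since `n p₂ → 1` while `M / L → 0`, the normalized
gap `(n M / L) (p₁ - p₂)` tends to `1/2`; since `p₁ / p₂ = L / (2 M · n p₂)`, also
`log (p₁ / p₂) / M → 1`. The product of these two limits is (2), and the first alone gives (1)
with `c = 1/4`, as `|p₁ - q₁| = p₁ - p₂`. -/

/-- The distribution `p` of Proposition 6: `p₁ = log n / (2n log log n)`, and
`p_i = (1 - p₁)/(n - 1)` for `2 ≤ i ≤ n` (and `0` outside `{1,…,n}`). -/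
noncomputable def pdist (n : ℕ) (i : ℕ) : ℝ :=
  if i = 1 then Real.log n / (2 * n * Real.log (Real.log n))
  else if 2 ≤ i ∧ i ≤ n then
    (1 - Real.log n / (2 * n * Real.log (Real.log n))) / ((n : ℝ) - 1)
  else 0

/-- The distribution `q` of Proposition 6: `q` is `p` with the masses of the symbols
`1` and `2` swapped, i.e. `q₂ = p₁` and `q_i = p₂` for `i ≠ 2` in `{1,…,n}`. -/
noncomputable def qdist (n : ℕ) (i : ℕ) : ℝ :=
  pdist n (Equiv.swap 1 2 i)

open Filter Real Topology

lemma pdist_one (n : ℕ) : pdist n 1 = log n / (2 * n * log (log n)) := by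
  simp [pdist]

lemma pdist_two {n : ℕ} (hn : 2 ≤ n) : pdist n 2 = (1 - pdist n 1) / (n - 1) := by
  simp [pdist, hn]

lemma qdist_one (n : ℕ) : qdist n 1 = pdist n 2 := by
  simp [qdist]

lemma qdist_two (n : ℕ) : qdist n 2 = pdist n 1 := by
  simp [qdist]

lemma qdist_of_ne {n i : ℕ} (h1 : i ≠ 1) (h2 : i ≠ 2) : qdist n i = pdist n i := by
  simp [qdist, Equiv.swap_apply_of_ne_of_ne h1 h2]

lemma sum_pdist_mul_log_div_qdist {n : ℕ} (hn : 2 ≤ n) :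
    ∑ i ∈ Finset.Icc 1 n, pdist n i * log (pdist n i / qdist n i)
      = (pdist n 1 - pdist n 2) * log (pdist n 1 / pdist n 2) := by
  have hsub : ({1, 2} : Finset ℕ) ⊆ Finset.Icc 1 n := by
    intro i hi
    simp only [Finset.mem_insert, Finset.mem_singleton] at hi
    rcases hi with rfl | rfl <;> simp [Finset.mem_Icc] <;> omega
  rw [← Finset.sum_subset hsub, Finset.sum_pair (by norm_num), qdist_one, qdist_two,
    ← inv_div, log_inv]
  · ring
  · intro i _ hi
    simp only [Finset.mem_insert, Finset.mem_singleton, not_or] at hi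
    rw [qdist_of_ne hi.1 hi.2]
    rcases eq_or_ne (pdist n i) 0 with h | h <;> simp [h]

lemma bddAbove_range_abs_pdist_sub_qdist (n : ℕ) :
    BddAbove (Set.range fun i => |pdist n i - qdist n i|) := by
  refine (tendsto_const_nhds (x := (0 : ℝ))).congr' ?_ |>.bddAbove_range
  filter_upwards [eventually_gt_atTop (max n 2)] with i hi
  rw [qdist_of_ne (by omega) (by omega), sub_self, abs_zero]

lemma tendsto_log_comp_div_self {α : Type*} {l : Filter α} {f : α → ℝ}
    (hf : Tendsto f l atTop) : Tendsto (fun x => log (f x) / f x) l (𝓝 0) :=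
  isLittleO_log_id_atTop.tendsto_div_nhds_zero.comp hf

lemma tendsto_log_natCast : Tendsto (fun n : ℕ => log n) atTop atTop :=
  tendsto_log_atTop.comp tendsto_natCast_atTop_atTop

lemma tendsto_log_log_natCast : Tendsto (fun n : ℕ => log (log n)) atTop atTop :=
  tendsto_log_atTop.comp tendsto_log_natCast

lemma tendsto_pdist_one : Tendsto (fun n => pdist n 1) atTop (𝓝 0) := by
  have h := ((tendsto_log_comp_div_self tendsto_natCast_atTop_atTop).const_mul (1 / 2)).mul
    tendsto_log_log_natCast.inv_tendsto_atTop
  simp only [mul_zero] at h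
  refine h.congr fun n => ?_
  rw [pdist_one, Pi.inv_apply]
  field_simp

lemma tendsto_natCast_mul_pdist_two : Tendsto (fun n : ℕ => n * pdist n 2) atTop (𝓝 1) := by
  have h := (tendsto_pdist_one.const_sub 1).mul (tendsto_natCast_div_add_atTop (-1 : ℝ))
  rw [sub_zero, one_mul] at h
  refine h.congr' ?_
  filter_upwards [eventually_ge_atTop 2] with n hn
  rw [pdist_two hn, ← sub_eq_add_neg]
  ring

lemma tendsto_gap :
    Tendsto (fun n : ℕ => n * log (log n) / log n * (pdist n 1 - pdist n 2)) atTop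
      (𝓝 (1 / 2)) := by
  have h := (tendsto_natCast_mul_pdist_two.mul
    (tendsto_log_comp_div_self tendsto_log_natCast)).const_sub (1 / 2)
  rw [mul_zero, sub_zero] at h
  refine h.congr' ?_
  filter_upwards [tendsto_log_log_natCast.eventually_gt_atTop 0] with n hM
  have hn : (n : ℝ) ≠ 0 := fun h => by simp [h] at hM
  have hL : log n ≠ 0 := fun h => by simp [h] at hM
  rw [pdist_one]
  field_simp

lemma tendsto_log_ratio :
    Tendsto (fun n : ℕ => log (pdist n 1 / pdist n 2) / log (log n)) atTop (𝓝 1) := by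
  have h := ((tendsto_log_comp_div_self tendsto_log_log_natCast).const_sub 1).sub
    (((tendsto_natCast_mul_pdist_two.log one_ne_zero).const_add (log 2)).mul
      tendsto_log_log_natCast.inv_tendsto_atTop)
  rw [log_one, mul_zero, sub_zero, sub_zero] at h
  refine h.congr' ?_
  filter_upwards [tendsto_log_log_natCast.eventually_gt_atTop 0,
    tendsto_natCast_mul_pdist_two.eventually_const_lt one_pos] with n hM hnb
  have hb : pdist n 2 ≠ 0 := (pos_of_mul_pos_right hnb (Nat.cast_nonneg n)).ne'
  have hn : (n : ℝ) ≠ 0 := fun h => by simp [h] at hM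
  have hL : log n ≠ 0 := fun h => by simp [h] at hM
  have hratio : pdist n 1 / pdist n 2 = log n / (2 * log (log n) * (n * pdist n 2)) := by
    rw [pdist_one]; field_simp
  rw [hratio, log_div hL (by positivity), log_mul (x := 2 * log (log n)) (by positivity) hnb.ne',
    log_mul two_ne_zero hM.ne', Pi.inv_apply]
  field_simp
  ring

/-- Proposition 6: (1) `‖p - q‖_∞ ≥ c log n / (n log log n)` for some
`c > 0` and all sufficiently large `n`; (2) `(n / log n) · D(p‖q) → 1/2`. -/
theorem stmt_16 :
    (∃ c > (0 : ℝ), ∃ N : ℕ, ∀ n ≥ N,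
        c * Real.log n / (n * Real.log (Real.log n)) ≤ ⨆ i : ℕ, |pdist n i - qdist n i|) ∧
      Filter.Tendsto
        (fun n : ℕ => ((n : ℝ) / Real.log n) *
          ∑ i ∈ Finset.Icc 1 n, pdist n i * Real.log (pdist n i / qdist n i))
        Filter.atTop (nhds (1 / 2)) := by
  have hloglog := tendsto_log_log_natCast.eventually_gt_atTop 0
  constructor
  · refine ⟨1 / 4, by norm_num, eventually_atTop.mp ?_⟩
    filter_upwards [hloglog, tendsto_gap.eventually_const_le (by norm_num : (1 / 4 : ℝ) < 1 / 2)]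
      with n hM hgap
    have hn : (0 : ℝ) < n := Nat.cast_pos.mpr (Nat.pos_of_ne_zero fun h => by simp [h] at hM)
    have hL : 0 < log n := (log_natCast_nonneg n).lt_of_ne fun h => by simp [← h] at hM
    calc 1 / 4 * log n / (n * log (log n))
        ≤ n * log (log n) / log n * (pdist n 1 - pdist n 2) * log n / (n * log (log n)) := by
          gcongr
      _ = pdist n 1 - pdist n 2 := by field_simp
      _ ≤ |pdist n 1 - qdist n 1| := by rw [qdist_one]; exact le_abs_self _
      _ ≤ ⨆ i : ℕ, |pdist n i - qdist n i| :=
          le_ciSup (bddAbove_range_abs_pdist_sub_qdist n) 1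
  · have h := tendsto_gap.mul tendsto_log_ratio
    rw [mul_one] at h
    refine h.congr' ?_
    filter_upwards [hloglog, eventually_ge_atTop 2] with n hM hn
    rw [sum_pdist_mul_log_div_qdist hn]
    field_simp
end
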